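/- arXiv:cs/9901004 — 2 statements merged into one kernel-verified Lean document; each statement's English description precedes it below -/
import Mathlib

section
/- Let (Ω,d,μ) be a probability metric space whose concentration function satisfies α(ε) ≤ C₁·exp(−C₂·ε²·n) for all ε > 0, where C₁, C₂ > 0 and n ∈ ℕ. Let X ⊆ Ω be a nonempty finite subset, let M be a median of d_X with M ≥ M₀ > 0, let 0 < ε < 1, and assume X is weakly (Mε/6)-homogeneous in Ω. Then for all query points x* ∈ Ω, apart from a set of measure at most 3·C₁^{1/2}·exp(−C₂·M₀²·ε²·n/72), the open ball of radius (1+ε)·d_X(x*) centred at x* contains either all elements of X or else at least (1/2)·C₁^{−1/2}·exp(C₂·M₀²·ε²·n/72) elements of X. -/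
open MeasureTheory Metric ENNReal

/-- The concentration function of a probability metric space:
`α(ε) = 1 - inf { μ(O_ε(A)) : A Borel, μ(A) ≥ 1/2 }`, where `O_ε(A)` is the
open `ε`-neighbourhood (thickening) of `A`. -/
noncomputable def concFn {Ω : Type*} [MetricSpace Ω] [MeasurableSpace Ω]
    (μ : Measure Ω) (ε : ℝ) : ℝ≥0∞ :=
  1 - ⨅ (A : Set Ω) (_ : MeasurableSet A) (_ : 1/2 ≤ μ A), μ (Metric.thickening ε A)

/-- `distToFinset X hX x = min_{y ∈ X} d(x,y)`, the distance from `x` to its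
nearest neighbour in the nonempty finite set `X`. -/
noncomputable def distToFinset {Ω : Type*} [MetricSpace Ω]
    (X : Finset Ω) (hX : X.Nonempty) (x : Ω) : ℝ :=
  X.inf' hX fun y => dist x y

/-- `Rrad μ x` is the supremum of the radii `r > 0` such that the open ball of
radius `r` centred at `x` has measure at most `1/2`. -/
noncomputable def Rrad {Ω : Type*} [MetricSpace Ω] [MeasurableSpace Ω]
    (μ : Measure Ω) (x : Ω) : ℝ :=
  sSup {r : ℝ | 0 < r ∧ μ (Metric.ball x r) ≤ 1/2}

/-- A finite set `X` is weakly `ε`-homogeneous in `Ω` if all the radii `R_x`,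
`x ∈ X`, lie in an interval of length `< ε`, i.e. `R_x - R_y < ε` for all
`x, y ∈ X`. -/
def WeaklyHomogeneous {Ω : Type*} [MetricSpace Ω] [MeasurableSpace Ω]
    (μ : Measure Ω) (ε : ℝ) (X : Finset Ω) : Prop :=
  ∀ x ∈ X, ∀ y ∈ X, Rrad μ x - Rrad μ y < ε

section Aux

variable {Ω : Type*} [MetricSpace Ω] [MeasurableSpace Ω] [BorelSpace Ω]
  (μ : Measure Ω) [IsProbabilityMeasure μ]

/-- main concentration consequence -/
lemma conc_thickening {δ a : ℝ} (h : concFn μ δ ≤ ENNReal.ofReal a) {A : Set Ω}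
    (hA : MeasurableSet A) (hhalf : 1/2 ≤ μ A) :
    1 - ENNReal.ofReal a ≤ μ (thickening δ A) := by
  have h1 : ⨅ (B : Set Ω) (_ : MeasurableSet B) (_ : 1/2 ≤ μ B), μ (thickening δ B)
      ≤ μ (thickening δ A) := by
    refine le_trans (iInf_le _ A) ?_
    exact le_trans (iInf_le _ hA) (iInf_le _ hhalf)
  have h2 : (1 : ℝ≥0∞) - μ (thickening δ A) ≤ concFn μ δ := tsub_le_tsub_left h1 1
  have h3 : (1:ℝ≥0∞) - μ (thickening δ A) ≤ ENNReal.ofReal a := h2.trans h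
  have h4 : (1:ℝ≥0∞) ≤ ENNReal.ofReal a + μ (thickening δ A) := tsub_le_iff_right.mp h3
  exact tsub_le_iff_left.mpr h4

/-- complement form -/
lemma conc_compl {δ a : ℝ} (h : concFn μ δ ≤ ENNReal.ofReal a) {A : Set Ω}
    (hA : MeasurableSet A) (hhalf : 1/2 ≤ μ A) {B : Set Ω}
    (hB : B ⊆ (thickening δ A)ᶜ) : μ B ≤ ENNReal.ofReal a := by
  have h1 := conc_thickening μ h hA hhalf
  have h2 : μ (thickening δ A)ᶜ = 1 - μ (thickening δ A) :=
    prob_compl_eq_one_sub isOpen_thickening.measurableSet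
  calc μ B ≤ μ (thickening δ A)ᶜ := measure_mono hB
    _ = 1 - μ (thickening δ A) := h2
    _ ≤ 1 - (1 - ENNReal.ofReal a) := by exact tsub_le_tsub_left h1 1
    _ ≤ ENNReal.ofReal a := by
        refine tsub_le_iff_left.mpr ?_
        exact le_tsub_add

/-- inflation step lemma: a set of measure `> a` has `δ`-thickening of measure `≥ 1/2`. -/
lemma step_lemma {δ a : ℝ} (h : concFn μ δ ≤ ENNReal.ofReal a)
    (A : Set Ω) (hA : ENNReal.ofReal a < μ A) : 1/2 ≤ μ (thickening δ A) := by
  by_contra hlt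
  push_neg at hlt
  set C := (thickening δ A)ᶜ with hC
  have hCmeas : MeasurableSet C := isOpen_thickening.measurableSet.compl
  have hChalf : 1/2 ≤ μ C := by
    have h2 : μ C = 1 - μ (thickening δ A) :=
      prob_compl_eq_one_sub isOpen_thickening.measurableSet
    rw [h2]
    have : (1:ℝ≥0∞) - 1/2 ≤ 1 - μ (thickening δ A) := tsub_le_tsub_left hlt.le 1
    calc (1:ℝ≥0∞)/2 = 1 - 1/2 := by
          rw [ENNReal.sub_half one_ne_top]
      _ ≤ _ := this
  have hsub : A ⊆ (thickening δ C)ᶜ := by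
    intro x hxA hxC
    rcases Metric.mem_thickening_iff.mp hxC with ⟨c, hcC, hdist⟩
    exact hcC (Metric.mem_thickening_iff.mpr ⟨x, hxA, by rwa [dist_comm]⟩)
  exact absurd (conc_compl μ h hCmeas hChalf hsub) (not_le.mpr hA)

end Aux

section Aux2
set_option linter.unusedSectionVars false

variable {Ω : Type*} [MetricSpace Ω] [MeasurableSpace Ω] [BorelSpace Ω]
  (μ : Measure Ω) [IsProbabilityMeasure μ]
variable (X : Finset Ω) (hX : X.Nonempty)

lemma dtf_le {z : Ω} {y : Ω} (hy : y ∈ X) : distToFinset X hX z ≤ dist z y :=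
  Finset.inf'_le _ hy

lemma dtf_exists (z : Ω) : ∃ y ∈ X, distToFinset X hX z = dist z y :=
  Finset.exists_mem_eq_inf' hX _

lemma dtf_lip (z w : Ω) : distToFinset X hX z ≤ dist z w + distToFinset X hX w := by
  obtain ⟨y, hy, hyw⟩ := dtf_exists X hX w
  calc distToFinset X hX z ≤ dist z y := dtf_le X hX hy
    _ ≤ dist z w + dist w y := dist_triangle _ _ _
    _ = dist z w + distToFinset X hX w := by rw [hyw]

lemma dtf_cont : Continuous (distToFinset X hX) := by
  have : LipschitzWith 1 (distToFinset X hX) := by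
    apply LipschitzWith.of_dist_le_mul
    intro z w
    rw [Real.dist_eq]
    push_cast
    rw [one_mul, abs_le]
    constructor
    · have := dtf_lip X hX w z
      rw [dist_comm] at this; linarith
    · have := dtf_lip X hX z w
      linarith
  exact this.continuous

lemma dtf_nonneg (z : Ω) : 0 ≤ distToFinset X hX z := by
  obtain ⟨y, hy, h⟩ := dtf_exists X hX z
  rw [h]; exact dist_nonneg

/-- the set of admissible radii is bounded above -/
lemma Rrad_bddAbove (y : Ω) : BddAbove {r : ℝ | 0 < r ∧ μ (Metric.ball y r) ≤ 1/2} := by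
  have h1 : ∀ᶠ (n : ℕ) in Filter.atTop, 1/2 < μ (Metric.ball y n) := by
    have huniv : μ (⋃ n : ℕ, Metric.ball y n) = 1 := by
      rw [Set.iUnion_eq_univ_iff.mpr, measure_univ]
      intro x
      obtain ⟨n, hn⟩ := exists_nat_gt (dist x y)
      exact ⟨n, by simpa [Metric.mem_ball] using hn⟩
    have hmono : Monotone (fun n : ℕ => Metric.ball y n) := fun a b hab =>
      Metric.ball_subset_ball (by exact_mod_cast hab)
    have := Directed.measure_iUnion (μ := μ)
      (hmono.directed_le)
    rw [huniv] at this
    have hlt : (1:ℝ≥0∞)/2 < ⨆ n : ℕ, μ (Metric.ball y n) := by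
      rw [← this]; exact ENNReal.half_lt_self one_ne_zero one_ne_top
    obtain ⟨n, hn⟩ := lt_iSup_iff.mp hlt
    filter_upwards [Filter.eventually_ge_atTop n] with m hm
    exact hn.trans_le (measure_mono (hmono hm))
  obtain ⟨n, hn⟩ := h1.exists
  refine ⟨n, fun r hr => ?_⟩
  by_contra hcon
  push_neg at hcon
  exact absurd (le_trans (measure_mono (Metric.ball_subset_ball hcon.le)) hr.2) (not_le.mpr hn)

/-- below the radius, balls are light -/
lemma Rrad_lt_half {y : Ω} {r : ℝ} (hne : {r : ℝ | 0 < r ∧ μ (Metric.ball y r) ≤ 1/2}.Nonempty)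
    (hr : r < Rrad μ y) : μ (Metric.ball y r) ≤ 1/2 := by
  obtain ⟨s, hs, hrs⟩ := exists_lt_of_lt_csSup hne hr
  exact le_trans (measure_mono (Metric.ball_subset_ball hrs.le)) hs.2

/-- above the radius, balls are heavy -/
lemma Rrad_gt_half {y : Ω} {r : ℝ} (hr : Rrad μ y < r) (hrpos : 0 < r) :
    1/2 < μ (Metric.ball y r) := by
  by_contra hcon
  push_neg at hcon
  have : r ∈ {r : ℝ | 0 < r ∧ μ (Metric.ball y r) ≤ 1/2} := ⟨hrpos, hcon⟩
  exact absurd (le_csSup (Rrad_bddAbove μ y) this) (not_le.mpr hr)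

/-- light at the radius itself (open ball) -/
lemma Rrad_ball_self {y : Ω} (hne : {r : ℝ | 0 < r ∧ μ (Metric.ball y r) ≤ 1/2}.Nonempty) :
    μ (Metric.ball y (Rrad μ y)) ≤ 1/2 := by
  set R := Rrad μ y with hR
  have hunion : Metric.ball y R = ⋃ n : ℕ, Metric.ball y (R - 1/(n+1)) := by
    ext x
    simp only [Metric.mem_ball, Set.mem_iUnion]
    constructor
    · intro h
      obtain ⟨n, hn⟩ := exists_nat_one_div_lt (show (0:ℝ) < R - dist x y by linarith)
      exact ⟨n, by push_cast at hn ⊢; linarith⟩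
    · rintro ⟨n, hn⟩
      have : (0:ℝ) < 1/(n+1) := by positivity
      linarith
  rw [hunion]
  have hmono : Monotone (fun n : ℕ => Metric.ball y (R - 1/(n+1))) := by
    intro a b hab
    apply Metric.ball_subset_ball
    have : (1:ℝ)/(b+1) ≤ 1/(a+1) := by
      apply one_div_le_one_div_of_le (by positivity)
      exact_mod_cast Nat.succ_le_succ hab
    linarith
  rw [Directed.measure_iUnion (hmono.directed_le)]
  refine iSup_le fun n => ?_
  apply Rrad_lt_half μ hne
  have : (0:ℝ) < 1/(n+1) := by positivity
  linarith

end Aux2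

section Aux3
set_option linter.unusedSectionVars false

variable {Ω : Type*} [MetricSpace Ω] [MeasurableSpace Ω] [BorelSpace Ω]
  (μ : Measure Ω) [IsProbabilityMeasure μ]
variable (X : Finset Ω) (hX : X.Nonempty)

/-- F1 : inner ball below the critical radius is `a`-light -/
lemma light_inner_ball {δ a : ℝ} (hconcδ : concFn μ δ ≤ ENNReal.ofReal a) {y : Ω}
    (hne : {r : ℝ | 0 < r ∧ μ (Metric.ball y r) ≤ 1/2}.Nonempty) :
    μ (Metric.ball y (Rrad μ y - δ)) ≤ ENNReal.ofReal a := by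
  set R := Rrad μ y with hR
  have hAmeas : MeasurableSet (Metric.ball y R)ᶜ := isOpen_ball.measurableSet.compl
  have hAhalf : 1/2 ≤ μ (Metric.ball y R)ᶜ := by
    rw [prob_compl_eq_one_sub isOpen_ball.measurableSet]
    have h1 := Rrad_ball_self μ hne
    calc (1:ℝ≥0∞)/2 = 1 - 1/2 := by rw [ENNReal.sub_half one_ne_top]
      _ ≤ 1 - μ (Metric.ball y R) := tsub_le_tsub_left h1 1
  refine conc_compl μ hconcδ hAmeas hAhalf ?_
  intro z hz hthick
  rcases Metric.mem_thickening_iff.mp hthick with ⟨w, hw, hdzw⟩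
  refine hw ?_
  rw [Metric.mem_ball] at hz ⊢
  calc dist w y ≤ dist w z + dist z y := dist_triangle _ _ _
    _ < δ + (R - δ) := by rw [dist_comm] at hdzw; exact add_lt_add hdzw hz
    _ = R := by ring

/-- F2 : ball above the critical radius inflates to near-full measure -/
lemma full_outer_ball {δ a : ℝ} (hconcδ : concFn μ δ ≤ ENNReal.ofReal a) {y : Ω} {r : ℝ}
    (hr : Rrad μ y < r) (hrpos : 0 < r) :
    1 - ENNReal.ofReal a ≤ μ (Metric.ball y (r + δ)) := by
  have hhalf : 1/2 ≤ μ (Metric.ball y r) := (Rrad_gt_half μ hr hrpos).le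
  have h1 := conc_thickening μ hconcδ isOpen_ball.measurableSet hhalf
  refine h1.trans (measure_mono ?_)
  intro z hz
  rcases Metric.mem_thickening_iff.mp hz with ⟨w, hw, hdzw⟩
  rw [Metric.mem_ball] at hw ⊢
  calc dist z y ≤ dist z w + dist w y := dist_triangle _ _ _
    _ < δ + r := add_lt_add hdzw hw
    _ = r + δ := by ring

/-- upper median tail -/
lemma median_upper_tail {δ a M : ℝ} (hδ : 0 < δ)
    (hconcδ : concFn μ δ ≤ ENNReal.ofReal a)
    (hM₁ : 1/2 ≤ μ {x | distToFinset X hX x ≤ M}) :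
    μ {z | M + δ ≤ distToFinset X hX z} ≤ ENNReal.ofReal a := by
  have hAmeas : MeasurableSet {x | distToFinset X hX x ≤ M} :=
    (isClosed_le (dtf_cont X hX) continuous_const).measurableSet
  refine conc_compl μ hconcδ hAmeas hM₁ ?_
  intro z hz hthick
  rcases Metric.mem_thickening_iff.mp hthick with ⟨w, hw, hdzw⟩
  simp only [Set.mem_setOf_eq] at hz hw
  have := dtf_lip X hX z w
  linarith

/-- lower median tail -/
lemma median_lower_tail {δ a M : ℝ} (hδ : 0 < δ)
    (hconcδ : concFn μ δ ≤ ENNReal.ofReal a)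
    (hM₂ : 1/2 ≤ μ {x | M ≤ distToFinset X hX x}) :
    μ {z | distToFinset X hX z ≤ M - δ} ≤ ENNReal.ofReal a := by
  have hAmeas : MeasurableSet {x | M ≤ distToFinset X hX x} :=
    (isClosed_le continuous_const (dtf_cont X hX)).measurableSet
  refine conc_compl μ hconcδ hAmeas hM₂ ?_
  intro z hz hthick
  rcases Metric.mem_thickening_iff.mp hthick with ⟨w, hw, hdzw⟩
  simp only [Set.mem_setOf_eq] at hz hw
  have := dtf_lip X hX w z
  rw [dist_comm] at hdzw
  linarith

/-- M is an admissible radius at every data point -/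
lemma M_mem_radii {M : ℝ} (hMpos : 0 < M)
    (hM₂ : 1/2 ≤ μ {x | M ≤ distToFinset X hX x}) {y : Ω} (hy : y ∈ X) :
    M ∈ {r : ℝ | 0 < r ∧ μ (Metric.ball y r) ≤ 1/2} := by
  refine ⟨hMpos, ?_⟩
  have hsub : {x | M ≤ distToFinset X hX x} ⊆ (Metric.ball y M)ᶜ := by
    intro z hz hball
    rw [Metric.mem_ball] at hball
    simp only [Set.mem_setOf_eq] at hz
    exact absurd ((dtf_le X hX hy).trans_lt hball) (not_lt.mpr hz)
  have h1 : 1/2 ≤ μ (Metric.ball y M)ᶜ := le_trans hM₂ (measure_mono hsub)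
  rw [prob_compl_eq_one_sub isOpen_ball.measurableSet] at h1
  have hx1 : μ (Metric.ball y M) ≤ 1 := prob_le_one
  have h2 : 1/2 + μ (Metric.ball y M) ≤ 1/2 + 1/2 := by
    calc 1/2 + μ (Metric.ball y M) ≤ (1 - μ (Metric.ball y M)) + μ (Metric.ball y M) :=
          add_le_add_left h1 _
      _ = 1 := tsub_add_cancel_of_le hx1
      _ = 1/2 + 1/2 := (ENNReal.add_halves 1).symm
  exact (ENNReal.add_le_add_iff_left (by norm_num)).mp h2

lemma M_le_Rrad {M : ℝ} (hMpos : 0 < M)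
    (hM₂ : 1/2 ≤ μ {x | M ≤ distToFinset X hX x}) {y : Ω} (hy : y ∈ X) :
    M ≤ Rrad μ y :=
  le_csSup (Rrad_bddAbove μ y) (M_mem_radii μ X hX hMpos hM₂ hy)

end Aux3

section Aux4
set_option linter.unusedSectionVars false

variable {Ω : Type*} [MetricSpace Ω] [MeasurableSpace Ω] [BorelSpace Ω]
  (μ : Measure Ω) [IsProbabilityMeasure μ]
variable (X : Finset Ω)

lemma sub_extract {a rb : ℝ} (hapos : 0 < a)
    (hlight : ∀ y ∈ X, μ (Metric.ball y rb) ≤ ENNReal.ofReal a) :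
    ∀ S : Finset Ω, S ⊆ X → ENNReal.ofReal a < μ (⋃ y ∈ (S : Set Ω), Metric.ball y rb) →
    ∃ S', S' ⊆ S ∧ ENNReal.ofReal a < μ (⋃ y ∈ (S' : Set Ω), Metric.ball y rb) ∧
      μ (⋃ y ∈ (S' : Set Ω), Metric.ball y rb) ≤ ENNReal.ofReal a + ENNReal.ofReal a := by
  classical
  intro S
  induction S using Finset.strongInductionOn with
  | _ S ih =>
    intro hSX hlt
    by_cases h2 : μ (⋃ y ∈ (S : Set Ω), Metric.ball y rb) ≤ ENNReal.ofReal a + ENNReal.ofReal a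
    · exact ⟨S, Finset.Subset.refl S, hlt, h2⟩
    push_neg at h2
    have hSne : S.Nonempty := by
      rcases Finset.eq_empty_or_nonempty S with h | h
      · exfalso
        rw [h] at hlt
        simp at hlt
      · exact h
    obtain ⟨y₀, hy₀⟩ := hSne
    have hsub : (⋃ y ∈ (S : Set Ω), Metric.ball y rb) ⊆
        (⋃ y ∈ ((S.erase y₀ : Finset Ω) : Set Ω), Metric.ball y rb) ∪ Metric.ball y₀ rb := by
      intro z hz
      simp only [Set.mem_iUnion, Finset.mem_coe, exists_prop] at hz
      obtain ⟨y, hyS, hzy⟩ := hz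
      by_cases hyy : y = y₀
      · right; rwa [hyy] at hzy
      · left
        simp only [Set.mem_iUnion, Finset.mem_coe, exists_prop]
        exact ⟨y, Finset.mem_erase.mpr ⟨hyy, hyS⟩, hzy⟩
    have hle : μ (⋃ y ∈ (S : Set Ω), Metric.ball y rb) ≤
        μ (⋃ y ∈ ((S.erase y₀ : Finset Ω) : Set Ω), Metric.ball y rb) + ENNReal.ofReal a := by
      calc μ (⋃ y ∈ (S : Set Ω), Metric.ball y rb)
          ≤ μ ((⋃ y ∈ ((S.erase y₀ : Finset Ω) : Set Ω), Metric.ball y rb) ∪ Metric.ball y₀ rb) :=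
            measure_mono hsub
        _ ≤ μ (⋃ y ∈ ((S.erase y₀ : Finset Ω) : Set Ω), Metric.ball y rb) + μ (Metric.ball y₀ rb) :=
            measure_union_le _ _
        _ ≤ _ := add_le_add_right (hlight y₀ (hSX hy₀)) _
    have hgt : ENNReal.ofReal a < μ (⋃ y ∈ ((S.erase y₀ : Finset Ω) : Set Ω), Metric.ball y rb) := by
      have h3 : ENNReal.ofReal a + ENNReal.ofReal a <
          μ (⋃ y ∈ ((S.erase y₀ : Finset Ω) : Set Ω), Metric.ball y rb) + ENNReal.ofReal a :=
        lt_of_lt_of_le h2 hle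
      exact (ENNReal.add_lt_add_iff_right ENNReal.ofReal_ne_top).mp h3
    obtain ⟨S', hS'sub, h1', h2'⟩ := ih (S.erase y₀) (Finset.erase_ssubset hy₀)
      ((Finset.erase_subset _ _).trans hSX) hgt
    exact ⟨S', hS'sub.trans (Finset.erase_subset _ _), h1', h2'⟩

lemma extract_families {a rb : ℝ} (hapos : 0 < a)
    (hlight : ∀ y ∈ X, μ (Metric.ball y rb) ≤ ENNReal.ofReal a) :
    ∀ (j : ℕ) (S : Finset Ω), S ⊆ X →
      ENNReal.ofReal (a * (2 * j + 1)) < μ (⋃ y ∈ (S : Set Ω), Metric.ball y rb) →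
    ∃ F : ℕ → Finset Ω,
      (∀ i ≤ j, F i ⊆ S ∧ ENNReal.ofReal a < μ (⋃ y ∈ (F i : Set Ω), Metric.ball y rb)) ∧
      (∀ i₁ i₂, i₁ ≤ j → i₂ ≤ j → i₁ ≠ i₂ → Disjoint (F i₁) (F i₂)) := by
  classical
  intro j
  induction j with
  | zero =>
    intro S hSX hlt
    have hlt' : ENNReal.ofReal a < μ (⋃ y ∈ (S : Set Ω), Metric.ball y rb) := by
      refine lt_of_le_of_lt (ENNReal.ofReal_le_ofReal ?_) hlt
      nlinarith
    obtain ⟨S', hS'S, h1, _⟩ := sub_extract μ X hapos hlight S hSX hlt'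
    refine ⟨fun _ => S', fun i hi => ⟨hS'S, h1⟩, fun i₁ i₂ h₁ h₂ hne => ?_⟩
    exfalso
    omega
  | succ j ihj =>
    intro S hSX hlt
    have hlt' : ENNReal.ofReal a < μ (⋃ y ∈ (S : Set Ω), Metric.ball y rb) := by
      refine lt_of_le_of_lt (ENNReal.ofReal_le_ofReal ?_) hlt
      nlinarith
    obtain ⟨S', hS'S, h1, h2⟩ := sub_extract μ X hapos hlight S hSX hlt'
    set T := S \ S' with hT
    have hsplit : (⋃ y ∈ (S : Set Ω), Metric.ball y rb) ⊆
        (⋃ y ∈ (T : Set Ω), Metric.ball y rb) ∪ (⋃ y ∈ (S' : Set Ω), Metric.ball y rb) := by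
      intro z hz
      simp only [Set.mem_iUnion, Finset.mem_coe, exists_prop] at hz
      obtain ⟨y, hyS, hzy⟩ := hz
      by_cases hyS' : y ∈ S'
      · right; simp only [Set.mem_iUnion, Finset.mem_coe, exists_prop]; exact ⟨y, hyS', hzy⟩
      · left; simp only [Set.mem_iUnion, Finset.mem_coe, exists_prop]
        exact ⟨y, Finset.mem_sdiff.mpr ⟨hyS, hyS'⟩, hzy⟩
    have heq : a * (2 * ↑(j+1) + 1) = a * (2 * ↑j + 1) + (a + a) := by push_cast; ring
    have hTgt : ENNReal.ofReal (a * (2 * ↑j + 1)) < μ (⋃ y ∈ (T : Set Ω), Metric.ball y rb) := by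
      have hlhs : ENNReal.ofReal (a * (2 * ↑(j+1) + 1)) =
          ENNReal.ofReal (a * (2 * ↑j + 1)) + (ENNReal.ofReal a + ENNReal.ofReal a) := by
        rw [heq, ENNReal.ofReal_add (by positivity) (by positivity),
          ENNReal.ofReal_add (by positivity) (by positivity)]
      have hchain : ENNReal.ofReal (a * (2 * ↑j + 1)) + (ENNReal.ofReal a + ENNReal.ofReal a) <
          μ (⋃ y ∈ (T : Set Ω), Metric.ball y rb) + (ENNReal.ofReal a + ENNReal.ofReal a) := by
        calc ENNReal.ofReal (a * (2 * ↑j + 1)) + (ENNReal.ofReal a + ENNReal.ofReal a)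
            = ENNReal.ofReal (a * (2 * ↑(j+1) + 1)) := hlhs.symm
          _ < μ (⋃ y ∈ (S : Set Ω), Metric.ball y rb) := hlt
          _ ≤ μ ((⋃ y ∈ (T : Set Ω), Metric.ball y rb) ∪ (⋃ y ∈ (S' : Set Ω), Metric.ball y rb)) :=
              measure_mono hsplit
          _ ≤ μ (⋃ y ∈ (T : Set Ω), Metric.ball y rb) + μ (⋃ y ∈ (S' : Set Ω), Metric.ball y rb) :=
              measure_union_le _ _
          _ ≤ _ := add_le_add_right h2 _
      exact (ENNReal.add_lt_add_iff_right (by simp [ENNReal.ofReal_ne_top])).mp hchain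
    obtain ⟨F', hF'1, hF'2⟩ := ihj T (Finset.sdiff_subset.trans hSX) hTgt
    refine ⟨fun i => if i = j + 1 then S' else F' i, ?_, ?_⟩
    · intro i hi
      by_cases hij : i = j + 1
      · simp only [hij, if_pos rfl]
        exact ⟨hS'S, h1⟩
      · have hij' : i ≤ j := Nat.lt_succ_iff.mp (lt_of_le_of_ne hi hij)
        simp only [if_neg hij]
        exact ⟨(hF'1 i hij').1.trans (Finset.sdiff_subset.trans (Finset.Subset.refl S)), (hF'1 i hij').2⟩
    · intro i₁ i₂ h₁ h₂ hne
      have hdisjTS' : ∀ i ≤ j, Disjoint (F' i) S' := fun i hi =>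
        Finset.disjoint_of_subset_left (hF'1 i hi).1 Finset.sdiff_disjoint
      by_cases e₁ : i₁ = j + 1
      · have e₂ : i₂ ≠ j + 1 := fun h => hne (e₁.trans h.symm)
        have hi₂ : i₂ ≤ j := Nat.lt_succ_iff.mp (lt_of_le_of_ne h₂ e₂)
        simp only [if_pos e₁, if_neg e₂]
        exact (hdisjTS' i₂ hi₂).symm
      · by_cases e₂ : i₂ = j + 1
        · have hi₁ : i₁ ≤ j := Nat.lt_succ_iff.mp (lt_of_le_of_ne h₁ e₁)
          simp only [if_neg e₁, if_pos e₂]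
          exact hdisjTS' i₁ hi₁
        · have hi₁ : i₁ ≤ j := Nat.lt_succ_iff.mp (lt_of_le_of_ne h₁ e₁)
          have hi₂ : i₂ ≤ j := Nat.lt_succ_iff.mp (lt_of_le_of_ne h₂ e₂)
          simp only [if_neg e₁, if_neg e₂]
          exact hF'2 i₁ i₂ hi₁ hi₂ hne

end Aux4

set_option maxHeartbeats 4000000 in
open scoped Classical in
/-- Asymptotic form of the main theorem: if the concentration function satisfies
`α(ε) ≤ C₁·exp(-C₂ε²n)`, `M ≥ M₀ > 0` is a median of `d_X`, `0 < ε < 1`, and `X`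
is weakly `(Mε/6)`-homogeneous, then for all query points `x*` apart from a set of
measure at most `3·C₁^{1/2}·exp(-C₂M₀²ε²n/72)`, the open ball of radius
`(1+ε)·d_X(x*)` centred at `x*` contains either all of `X` or else at least
`(1/2)·C₁^{-1/2}·exp(C₂M₀²ε²n/72)` elements of `X`. -/
theorem main_theorem_levy {Ω : Type*} [MetricSpace Ω] [MeasurableSpace Ω] [BorelSpace Ω]
    (μ : Measure Ω) [IsProbabilityMeasure μ]
    (C₁ C₂ : ℝ) (hC₁ : 0 < C₁) (hC₂ : 0 < C₂) (n : ℕ)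
    (hconc : ∀ e > (0 : ℝ), concFn μ e ≤ ENNReal.ofReal (C₁ * Real.exp (-C₂ * e ^ 2 * n)))
    (X : Finset Ω) (hX : X.Nonempty) (M M₀ : ℝ) (hM₀ : 0 < M₀) (hMM₀ : M₀ ≤ M)
    (hM₁ : 1/2 ≤ μ {x | distToFinset X hX x ≤ M})
    (hM₂ : 1/2 ≤ μ {x | M ≤ distToFinset X hX x})
    (ε : ℝ) (hε₀ : 0 < ε) (hε₁ : ε < 1)
    (hhom : WeaklyHomogeneous μ (M * ε / 6) X) :
    μ {xq : Ω |
        ¬ ((∀ x ∈ X, dist xq x < (1 + ε) * distToFinset X hX xq) ∨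
          (1/2) * (Real.sqrt C₁)⁻¹ * Real.exp (C₂ * M₀ ^ 2 * ε ^ 2 * n / 72) ≤
            ((X.filter fun y => dist xq y < (1 + ε) * distToFinset X hX xq).card : ℝ))}
      ≤ ENNReal.ofReal (3 * Real.sqrt C₁ * Real.exp (-(C₂ * M₀ ^ 2 * ε ^ 2 * n / 72))) := by
  classical
  have hMpos : 0 < M := lt_of_lt_of_le hM₀ hMM₀
  set ρ : Ω → ℝ := distToFinset X hX with hρdef
  set δ : ℝ := M * ε / 6 with hδdef
  have hδpos : 0 < δ := by positivity
  set a : ℝ := C₁ * Real.exp (-C₂ * δ ^ 2 * n) with hadef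
  have hapos : 0 < a := by positivity
  have hconcδ : concFn μ δ ≤ ENNReal.ofReal a := hconc δ hδpos
  set s₀ : ℝ := Real.sqrt C₁ * Real.exp (-(C₂ * M₀ ^ 2 * ε ^ 2 * n / 72)) with hs₀def
  have hsqrtpos : 0 < Real.sqrt C₁ := Real.sqrt_pos.mpr hC₁
  have hs₀pos : 0 < s₀ := mul_pos hsqrtpos (Real.exp_pos _)
  -- rewrite the goal bound
  have hRHSeq : ENNReal.ofReal (3 * Real.sqrt C₁ * Real.exp (-(C₂ * M₀ ^ 2 * ε ^ 2 * n / 72)))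
      = ENNReal.ofReal (3 * s₀) := by rw [hs₀def, mul_assoc]
  rw [hRHSeq]
  -- a ≤ s₀ ^ 2
  have ha_le : a ≤ s₀ ^ 2 := by
    have h1 : s₀ ^ 2 = C₁ * Real.exp (-(C₂ * M₀ ^ 2 * ε ^ 2 * n / 72) +
        -(C₂ * M₀ ^ 2 * ε ^ 2 * n / 72)) := by
      rw [hs₀def, mul_pow, Real.sq_sqrt hC₁.le, sq, ← Real.exp_add]
    rw [h1, hadef]
    have hM2 : M₀ ^ 2 ≤ M ^ 2 := by nlinarith
    have hexp : -C₂ * δ ^ 2 * n ≤ -(C₂ * M₀ ^ 2 * ε ^ 2 * n / 72) +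
        -(C₂ * M₀ ^ 2 * ε ^ 2 * n / 72) := by
      rw [hδdef]
      have hn : (0:ℝ) ≤ n := Nat.cast_nonneg n
      nlinarith [sq_nonneg ε, sq_nonneg M, mul_nonneg (mul_nonneg hC₂.le hn) (sq_nonneg ε)]
    exact mul_le_mul_of_nonneg_left (Real.exp_le_exp.mpr hexp) hC₁.le
  -- the count constant
  clear_value a s₀
  set K : ℝ := 1 / (2 * s₀) with hKdef
  have hKeq : (1:ℝ)/2 * (Real.sqrt C₁)⁻¹ * Real.exp (C₂ * M₀ ^ 2 * ε ^ 2 * n / 72) = K := by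
    rw [hKdef, hs₀def]
    rw [show -(C₂ * M₀ ^ 2 * ε ^ 2 * ↑n / 72) = -(C₂ * M₀ ^ 2 * ε ^ 2 * ↑n / 72) from rfl,
      Real.exp_neg]
    field_simp
  have hKpos : 0 < K := by rw [hKdef]; positivity
  clear_value K
  set k : ℕ := min (⌈K⌉₊) X.card with hkdef
  have hk1 : 1 ≤ k := by
    rw [hkdef]
    exact le_min (Nat.one_le_ceil_iff.mpr hKpos) (Finset.card_pos.mpr hX)
  -- trivial regime
  by_cases htriv : 1 ≤ 3 * s₀
  · calc μ _ ≤ 1 := prob_le_one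
      _ ≤ ENNReal.ofReal (3 * s₀) := by
          rw [← ENNReal.ofReal_one]; exact ENNReal.ofReal_le_ofReal htriv
  push_neg at htriv
  have hs₀13 : s₀ < 1/3 := by linarith
  have ha19 : a < 1/9 := lt_of_le_of_lt ha_le (by nlinarith)
  have ha_s₀ : a ≤ s₀ := le_trans ha_le (by nlinarith)
  -- median tails
  have hE₁ : μ {z | ρ z ≤ M - δ} ≤ ENNReal.ofReal a :=
    median_lower_tail μ X hX hδpos hconcδ hM₂
  have hE₂ : μ {z | M + δ ≤ ρ z} ≤ ENNReal.ofReal a :=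
    median_upper_tail μ X hX hδpos hconcδ hM₁
  -- bad core
  set W : Set Ω := {z | (M - δ < ρ z ∧ ρ z < M + δ) ∧
      (X.filter fun y => dist z y < (1 + ε) * ρ z).card < k} with hWdef
  -- inclusion of the bad set
  have hBsub : {xq : Ω |
        ¬ ((∀ x ∈ X, dist xq x < (1 + ε) * ρ xq) ∨
          (1:ℝ)/2 * (Real.sqrt C₁)⁻¹ * Real.exp (C₂ * M₀ ^ 2 * ε ^ 2 * n / 72) ≤
            ((X.filter fun y => dist xq y < (1 + ε) * ρ xq).card : ℝ))} ⊆
      {z | ρ z ≤ M - δ} ∪ ({z | M + δ ≤ ρ z} ∪ W) := by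
    intro z hz
    simp only [Set.mem_setOf_eq] at hz
    push_neg at hz
    obtain ⟨⟨y₀, hy₀X, hy₀far⟩, hcard⟩ := hz
    rw [hKeq] at hcard
    by_cases h₁ : ρ z ≤ M - δ
    · exact Or.inl h₁
    by_cases h₂ : M + δ ≤ ρ z
    · exact Or.inr (Or.inl h₂)
    push_neg at h₁ h₂
    refine Or.inr (Or.inr ⟨⟨h₁, h₂⟩, ?_⟩)
    rw [hkdef]
    refine lt_min (Nat.lt_ceil.mpr hcard) (Finset.card_lt_card ?_)
    rw [Finset.ssubset_iff_of_subset (Finset.filter_subset _ _)]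
    exact ⟨y₀, hy₀X, fun hmem => absurd (Finset.mem_filter.mp hmem).2 (not_lt.mpr hy₀far)⟩
  refine le_trans (measure_mono hBsub) ?_
  refine le_trans (measure_union_le _ _) ?_
  refine le_trans (add_le_add hE₁ (measure_union_le _ _)) ?_
  refine le_trans (add_le_add_right (add_le_add hE₂ le_rfl) _) ?_
  -- now need : ofReal a + (ofReal a + μ W) ≤ ofReal (3 * s₀)
  -- key numeric radius identity
  have hradius : (1 + ε) * (M - δ) = M + (5 - ε) * δ := by
    rw [hδdef]; ring
  -- case split on the critical radius
  by_cases hcase : ∃ y₀ ∈ X, Rrad μ y₀ ≤ M + (5 - ε) * δ / 2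
  · -- CASE I
    obtain ⟨y₀, hy₀X, hy₀R⟩ := hcase
    have hRub : ∀ y ∈ X, Rrad μ y < M + (5 - ε) * δ / 2 + δ := by
      intro y hy
      have h := hhom y hy y₀ hy₀X
      linarith
    obtain ⟨S₀, hS₀X, hS₀card⟩ := Finset.exists_subset_card_eq (min_le_right (⌈K⌉₊) X.card)
    set rI : ℝ := M + (5 - ε) * δ / 2 + δ + δ with hrIdef
    have hIc : μ (⋃ y ∈ (S₀ : Set Ω), (Metric.ball y rI)ᶜ) ≤ k * ENNReal.ofReal a := by
      refine le_trans (measure_biUnion_finset_le _ _) ?_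
      have hterm : ∀ y ∈ S₀, μ (Metric.ball y rI)ᶜ ≤ ENNReal.ofReal a := by
        intro y hy
        have hfull : 1 - ENNReal.ofReal a ≤ μ (Metric.ball y (M + (5 - ε) * δ / 2 + δ + δ)) :=
          full_outer_ball μ hconcδ (hRub y (hS₀X hy))
            (by have h5e : 0 < (5-ε)*δ := mul_pos (by linarith) hδpos; linarith)
        rw [prob_compl_eq_one_sub isOpen_ball.measurableSet]
        rw [← hrIdef] at hfull
        calc 1 - μ (Metric.ball y rI) ≤ 1 - (1 - ENNReal.ofReal a) :=
              tsub_le_tsub_left hfull 1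
          _ ≤ ENNReal.ofReal a := by
              refine tsub_le_iff_left.mpr ?_; exact le_tsub_add
      calc ∑ y ∈ S₀, μ (Metric.ball y rI)ᶜ ≤ ∑ _y ∈ S₀, ENNReal.ofReal a :=
            Finset.sum_le_sum hterm
        _ = S₀.card * ENNReal.ofReal a := by rw [Finset.sum_const, nsmul_eq_mul]
        _ = k * ENNReal.ofReal a := by rw [hS₀card]
    have hWsub : W ⊆ ⋃ y ∈ (S₀ : Set Ω), (Metric.ball y rI)ᶜ := by
      intro z hz
      obtain ⟨⟨hz1, hz2⟩, hzcard⟩ := hz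
      by_contra hnot
      have hball : ∀ y ∈ S₀, dist z y < rI := by
        intro y hy
        by_contra hge
        exact hnot (Set.mem_biUnion hy (fun hmem => hge (Metric.mem_ball.mp hmem)))
      have hrlt : rI ≤ (1 + ε) * (M - δ) := by
        rw [hrIdef, hradius]
        have h1e : 0 ≤ (1-ε)*δ := mul_nonneg (by linarith) hδpos.le
        nlinarith
      have hmono : (1 + ε) * (M - δ) < (1 + ε) * ρ z :=
        mul_lt_mul_of_pos_left hz1 (by linarith)
      have hsub : S₀ ⊆ X.filter fun y => dist z y < (1 + ε) * ρ z := by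
        intro y hy
        refine Finset.mem_filter.mpr ⟨hS₀X hy, ?_⟩
        have := hball y hy
        linarith
      have := Finset.card_le_card hsub
      rw [hS₀card] at this
      omega
    have hWle : μ W ≤ k * ENNReal.ofReal a := le_trans (measure_mono hWsub) hIc
    -- numeric assembly
    have hknum : (k : ℝ) ≤ K + 1 := by
      have h1 : (k : ℝ) ≤ (⌈K⌉₊ : ℝ) := by
        exact_mod_cast Nat.cast_le.mpr (min_le_left _ _)
      have h2 : (⌈K⌉₊ : ℝ) < K + 1 := Nat.ceil_lt_add_one hKpos.le
      linarith
    calc ENNReal.ofReal a + (ENNReal.ofReal a + μ W)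
        ≤ ENNReal.ofReal a + (ENNReal.ofReal a + k * ENNReal.ofReal a) := by
          exact add_le_add_right (add_le_add_right hWle _) _
      _ = ENNReal.ofReal (a + (a + k * a)) := by
          rw [ENNReal.ofReal_add hapos.le (by positivity),
            ENNReal.ofReal_add hapos.le (by positivity), ENNReal.ofReal_mul (Nat.cast_nonneg k),
            ENNReal.ofReal_natCast]
      _ ≤ ENNReal.ofReal (3 * s₀) := by
          refine ENNReal.ofReal_le_ofReal ?_
          have h1 : (k:ℝ) * a ≤ (K + 1) * a := mul_le_mul_of_nonneg_right hknum hapos.le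
          have h2 : K * a ≤ K * s₀ ^ 2 := mul_le_mul_of_nonneg_left ha_le hKpos.le
          have h3 : K * s₀ ^ 2 = s₀ / 2 := by rw [hKdef]; field_simp
          have h4 : s₀ * s₀ ≤ s₀ * (1/3) := mul_le_mul_of_nonneg_left hs₀13.le hs₀pos.le
          have h5 : s₀ ^ 2 = s₀ * s₀ := sq s₀
          nlinarith
  · -- CASE II
    push_neg at hcase
    have hka : ((k-1:ℕ):ℝ) < K := by
      have h1 : (k:ℝ) ≤ (⌈K⌉₊:ℝ) := Nat.cast_le.mpr (min_le_left _ _)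
      have h2 : (⌈K⌉₊ : ℝ) < K + 1 := Nat.ceil_lt_add_one hKpos.le
      have h3 : ((k-1:ℕ):ℝ) = (k:ℝ) - 1 := by rw [Nat.cast_sub hk1]; simp
      linarith
    clear_value k
    set rb : ℝ := M + (3 - ε) * δ / 2 with hrbdef
    have hlight : ∀ y ∈ X, μ (Metric.ball y rb) ≤ ENNReal.ofReal a := by
      intro y hy
      have hR := hcase y hy
      have hsub : Metric.ball y rb ⊆ Metric.ball y (Rrad μ y - δ) :=
        Metric.ball_subset_ball (by rw [hrbdef]; linarith)
      exact le_trans (measure_mono hsub)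
        (light_inner_ball μ hconcδ ⟨M, M_mem_radii μ X hX hMpos hM₂ hy⟩)
    have hcover : 1 - ENNReal.ofReal a ≤ μ (⋃ y ∈ (X : Set Ω), Metric.ball y rb) := by
      have hsub : {z | ρ z < M + δ} ⊆ ⋃ y ∈ (X : Set Ω), Metric.ball y rb := by
        intro z hz
        obtain ⟨y, hyX, hyeq⟩ := dtf_exists X hX z
        refine Set.mem_biUnion hyX ?_
        rw [Metric.mem_ball]
        have hz' : ρ z < M + δ := hz
        have : dist z y = ρ z := hyeq.symm
        rw [this, hrbdef]
        have h1e : 0 ≤ (1-ε)*δ := mul_nonneg (by linarith) hδpos.le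
        nlinarith
      have hmeas : MeasurableSet {z | M + δ ≤ ρ z} :=
        (isClosed_le continuous_const (dtf_cont X hX)).measurableSet
      have hcompl : {z | ρ z < M + δ} = {z | M + δ ≤ ρ z}ᶜ := by
        ext w; simp [not_le]
      have h1 : 1 - ENNReal.ofReal a ≤ μ {z | ρ z < M + δ} := by
        rw [hcompl, prob_compl_eq_one_sub hmeas]
        exact tsub_le_tsub_left hE₂ 1
      exact h1.trans (measure_mono hsub)
    have hWbound : μ W ≤ ENNReal.ofReal s₀ := by
      by_contra hWbig
      push_neg at hWbig
      -- inflate W twice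
      have hW1 : 1/2 ≤ μ (thickening δ W) :=
        step_lemma μ hconcδ W (lt_of_le_of_lt (ENNReal.ofReal_le_ofReal ha_s₀) hWbig)
      have hW2' : 1 - ENNReal.ofReal a ≤ μ (thickening δ (thickening δ W)) :=
        conc_thickening μ hconcδ isOpen_thickening.measurableSet hW1
      set W₂ : Set Ω := thickening δ (thickening δ W) with hW₂def
      have hW₂meas : MeasurableSet W₂ := isOpen_thickening.measurableSet
      have hW₂c : μ W₂ᶜ ≤ ENNReal.ofReal a := by
        rw [prob_compl_eq_one_sub hW₂meas]
        calc 1 - μ W₂ ≤ 1 - (1 - ENNReal.ofReal a) := tsub_le_tsub_left hW2' 1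
          _ ≤ ENNReal.ofReal a := tsub_le_iff_left.mpr le_tsub_add
      -- extraction of disjoint families
      set x : ℝ := (1 - 2*a) / (2*a) with hxdef
      have hxpos : 0 < x := by
        rw [hxdef]
        apply div_pos (by linarith) (by linarith)
      clear_value x
      set j : ℕ := ⌈x⌉₊ - 1 with hjdef
      have hj1 : 1 ≤ ⌈x⌉₊ := Nat.one_le_ceil_iff.mpr hxpos
      set m : ℕ := j + 1 with hmdef
      have hmceil : m = ⌈x⌉₊ := by rw [hmdef, hjdef]; omega
      have hmx : x ≤ (m : ℝ) := by rw [hmceil]; exact Nat.le_ceil x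
      have hjx : (j : ℝ) < x := by
        have h2 : (⌈x⌉₊ : ℝ) < x + 1 := Nat.ceil_lt_add_one hxpos.le
        have h3 : (j:ℝ) = (⌈x⌉₊ : ℝ) - 1 := by
          rw [hjdef, Nat.cast_sub hj1]; simp
        linarith
      have h2ax : 2*a*x = 1 - 2*a := by rw [hxdef]; field_simp
      have hextract_in : ENNReal.ofReal (a * (2 * (j:ℝ) + 1)) <
          μ (⋃ y ∈ (X:Set Ω), Metric.ball y rb) := by
        have h2aj : 2*a*(j:ℝ) < 1 - 2*a := by
          have h6 := mul_lt_mul_of_pos_left hjx (by linarith : (0:ℝ) < 2*a)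
          linarith
        have hr1 : a * (2 * (j:ℝ) + 1) < 1 - a := by
          have h7 : a * (2 * (j:ℝ) + 1) = 2*a*(j:ℝ) + a := by ring
          linarith
        calc ENNReal.ofReal (a * (2*(j:ℝ)+1)) < ENNReal.ofReal (1 - a) :=
              (ENNReal.ofReal_lt_ofReal_iff (by linarith)).mpr hr1
          _ = 1 - ENNReal.ofReal a := by
              rw [ENNReal.ofReal_sub _ hapos.le, ENNReal.ofReal_one]
          _ ≤ _ := hcover
      obtain ⟨F, hF1, hF2⟩ := extract_families μ X hapos hlight j X
        (Finset.Subset.refl X) hextract_in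
      set C : ℕ → Set Ω := fun i => thickening δ (⋃ y ∈ (F i : Set Ω), Metric.ball y rb)
        with hCdef
      have hCmeas : ∀ i : ℕ, MeasurableSet (C i) := fun i => isOpen_thickening.measurableSet
      have hChalf : ∀ i < m, 1/2 ≤ μ (C i) := fun i hi =>
        step_lemma μ hconcδ _ (hF1 i (Nat.lt_succ_iff.mp hi)).2
      -- key counting claim
      have hkey : ∀ z ∈ W₂, ((Finset.range m).filter (fun i => z ∈ C i)).card < k := by
        intro z hz
        obtain ⟨w₁, hw₁, hd1⟩ := Metric.mem_thickening_iff.mp hz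
        obtain ⟨zb, hzb, hd2⟩ := Metric.mem_thickening_iff.mp hw₁
        obtain ⟨⟨hb1, hb2⟩, hbcard⟩ := hzb
        have hdzzb : dist z zb < 2 * δ := by
          calc dist z zb ≤ dist z w₁ + dist w₁ zb := dist_triangle _ _ _
            _ < δ + δ := add_lt_add hd1 hd2
            _ = 2 * δ := by ring
        set P := (Finset.range m).filter (fun i => z ∈ C i) with hPdef
        have hchoice : ∀ i ∈ P, ∃ y, y ∈ F i ∧ dist z y < δ + rb := by
          intro i hi
          have hzC : z ∈ C i := (Finset.mem_filter.mp hi).2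
          obtain ⟨u, hu, hdu⟩ := Metric.mem_thickening_iff.mp hzC
          obtain ⟨y, hyF, hyb⟩ := Set.mem_iUnion₂.mp hu
          refine ⟨y, hyF, ?_⟩
          rw [Metric.mem_ball] at hyb
          calc dist z y ≤ dist z u + dist u y := dist_triangle _ _ _
            _ < δ + rb := add_lt_add hdu hyb
        set f : ℕ → Ω := fun i =>
          if h : ∃ y, y ∈ F i ∧ dist z y < δ + rb then h.choose else hX.choose with hfdef
        have hfspec : ∀ i ∈ P, f i ∈ F i ∧ dist z (f i) < δ + rb := by
          intro i hi
          have hex : ∃ y, y ∈ F i ∧ dist z y < δ + rb := hchoice i hi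
          have hfi : f i = hex.choose := by rw [hfdef]; exact dif_pos hex
          rw [hfi]
          exact hex.choose_spec
        have hfF : ∀ i ∈ P, f i ∈ F i := fun i hi => (hfspec i hi).1
        have hfd : ∀ i ∈ P, dist z (f i) < δ + rb := fun i hi => (hfspec i hi).2
        have hinj : Set.InjOn f (P : Set ℕ) := by
          intro i₁ hi₁' i₂ hi₂' heq
          have hi₁ : i₁ ∈ P := hi₁'
          have hi₂ : i₂ ∈ P := hi₂'
          by_contra hne
          have hi₁' : i₁ ≤ j := by
            have := (Finset.mem_filter.mp hi₁).1
            rw [Finset.mem_range] at this; omega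
          have hi₂' : i₂ ≤ j := by
            have := (Finset.mem_filter.mp hi₂).1
            rw [Finset.mem_range] at this; omega
          have hd := hF2 i₁ i₂ hi₁' hi₂' hne
          have h1 := hfF i₁ hi₁
          have h2 := hfF i₂ hi₂
          rw [heq] at h1
          exact (Finset.disjoint_left.mp hd h1) h2
        have hmaps : ∀ i ∈ P, f i ∈ X.filter fun y => dist zb y < (1 + ε) * ρ zb := by
          intro i hi
          have hi' : i ≤ j := by
            have := (Finset.mem_filter.mp hi).1
            rw [Finset.mem_range] at this; omega
          refine Finset.mem_filter.mpr ⟨(hF1 i hi').1 (hfF i hi), ?_⟩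
          have hdist : dist zb (f i) < 2*δ + (δ + rb) := by
            calc dist zb (f i) ≤ dist zb z + dist z (f i) := dist_triangle _ _ _
              _ < 2*δ + (δ + rb) := by
                  rw [dist_comm zb z]
                  exact add_lt_add hdzzb (hfd i hi)
          have hstep : 2*δ + (δ + rb) ≤ (1 + ε) * (M - δ) := by
            rw [hrbdef, hradius]
            have h1e : 0 ≤ (1-ε)*δ := mul_nonneg (by linarith) hδpos.le
            nlinarith
          have hstep2 : (1 + ε) * (M - δ) < (1 + ε) * ρ zb :=
            mul_lt_mul_of_pos_left hb1 (by linarith)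
          rw [dist_comm zb (f i)] at hdist ⊢
          linarith
        have hcards := Finset.card_le_card_of_injOn f hmaps hinj
        exact lt_of_le_of_lt hcards hbcard
      -- summation bounds
      have hlow : (m : ℝ≥0∞) * (1/2) ≤ ∑ i ∈ Finset.range m, μ (C i) := by
        calc (m:ℝ≥0∞) * (1/2) = ∑ _i ∈ Finset.range m, (1/2 : ℝ≥0∞) := by
              rw [Finset.sum_const, Finset.card_range, nsmul_eq_mul]
          _ ≤ _ := Finset.sum_le_sum (fun i hi => hChalf i (Finset.mem_range.mp hi))
      have hinter : ∑ i ∈ Finset.range m, μ (C i ∩ W₂) ≤ ((k-1 : ℕ) : ℝ≥0∞) := by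
        have hmeasI : ∀ i ∈ Finset.range m, MeasurableSet (C i ∩ W₂) :=
          fun i _ => (hCmeas i).inter hW₂meas
        have heq1 : ∀ i ∈ Finset.range m, μ (C i ∩ W₂) = ∫⁻ z, (C i ∩ W₂).indicator 1 z ∂μ :=
          fun i hi => (lintegral_indicator_one (hmeasI i hi)).symm
        rw [Finset.sum_congr rfl heq1, ← lintegral_finset_sum _
          (fun i hi => (measurable_one.indicator (hmeasI i hi)))]
        calc ∫⁻ z, ∑ i ∈ Finset.range m, (C i ∩ W₂).indicator 1 z ∂μ
            ≤ ∫⁻ _z, ((k-1:ℕ) : ℝ≥0∞) ∂μ := by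
              refine lintegral_mono fun z => ?_
              by_cases hz : z ∈ W₂
              · have hcard := hkey z hz
                have hsum_eq : ∑ i ∈ Finset.range m, (C i ∩ W₂).indicator (1 : Ω → ℝ≥0∞) z
                    = (((Finset.range m).filter (fun i => z ∈ C i ∩ W₂)).card : ℝ≥0∞) := by
                  rw [← Finset.sum_boole]
                  refine Finset.sum_congr rfl fun i _ => ?_
                  by_cases hmem : z ∈ C i ∩ W₂ <;>
                    simp [Set.indicator_apply, hmem]
                rw [hsum_eq]
                have hsubf : (Finset.range m).filter (fun i => z ∈ C i ∩ W₂) ⊆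
                    (Finset.range m).filter (fun i => z ∈ C i) := by
                  intro i hi
                  rw [Finset.mem_filter] at hi ⊢
                  exact ⟨hi.1, hi.2.1⟩
                have hle1 : ((Finset.range m).filter (fun i => z ∈ C i ∩ W₂)).card ≤ k - 1 := by
                  have h2 := Finset.card_le_card hsubf
                  omega
                exact (Nat.cast_le (α := ℝ≥0∞)).mpr hle1
              · have hzero : ∀ i ∈ Finset.range m,
                    (C i ∩ W₂).indicator (1:Ω → ℝ≥0∞) z = 0 :=
                  fun i _ => Set.indicator_of_notMem (fun hmem => hz hmem.2) _
                rw [Finset.sum_congr rfl hzero]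
                simp
          _ = ((k-1:ℕ) : ℝ≥0∞) := by rw [lintegral_const, measure_univ, mul_one]
      have hup : ∑ i ∈ Finset.range m, μ (C i) ≤
          ((k-1:ℕ):ℝ≥0∞) + (m:ℝ≥0∞) * ENNReal.ofReal a := by
        calc ∑ i ∈ Finset.range m, μ (C i)
            = ∑ i ∈ Finset.range m, (μ (C i ∩ W₂) + μ (C i \ W₂)) :=
              Finset.sum_congr rfl fun i hi => (measure_inter_add_diff (C i) hW₂meas).symm
          _ = (∑ i ∈ Finset.range m, μ (C i ∩ W₂)) + ∑ i ∈ Finset.range m, μ (C i \ W₂) :=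
              Finset.sum_add_distrib
          _ ≤ ((k-1:ℕ):ℝ≥0∞) + ∑ _i ∈ Finset.range m, ENNReal.ofReal a := by
              refine add_le_add hinter (Finset.sum_le_sum fun i hi => ?_)
              refine le_trans (measure_mono ?_) hW₂c
              intro w hw
              exact hw.2
          _ = ((k-1:ℕ):ℝ≥0∞) + (m:ℝ≥0∞) * ENNReal.ofReal a := by
              rw [Finset.sum_const, Finset.card_range, nsmul_eq_mul]
      have hmain : (m:ℝ≥0∞) * (1/2) ≤ ((k-1:ℕ):ℝ≥0∞) + (m:ℝ≥0∞) * ENNReal.ofReal a :=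
        hlow.trans hup
      -- convert to a real inequality
      have hreal : (m:ℝ) * (1/2) ≤ ((k-1:ℕ):ℝ) + (m:ℝ) * a := by
        have hne : ((k-1:ℕ):ℝ≥0∞) + (m:ℝ≥0∞) * ENNReal.ofReal a ≠ ⊤ := by
          refine ENNReal.add_ne_top.mpr ⟨ENNReal.natCast_ne_top _, ?_⟩
          exact ENNReal.mul_ne_top (ENNReal.natCast_ne_top _) ENNReal.ofReal_ne_top
        have h1 := ENNReal.toReal_mono hne hmain
        rw [ENNReal.toReal_add (ENNReal.natCast_ne_top _)
            (ENNReal.mul_ne_top (ENNReal.natCast_ne_top _) ENNReal.ofReal_ne_top),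
          ENNReal.toReal_mul, ENNReal.toReal_mul, ENNReal.toReal_ofReal hapos.le,
          ENNReal.toReal_natCast, ENNReal.toReal_natCast] at h1
        have h12 : ((1:ℝ≥0∞)/2).toReal = (1:ℝ)/2 := by norm_num
        rw [h12] at h1
        exact h1
      -- numeric contradiction
      have hgt : ((k-1:ℕ):ℝ) < (1-2*a)^2/(4*a) := by
        by_cases hK2 : K ≤ 2
        · have hnat : ((k-1:ℕ):ℝ) < 2 := lt_of_lt_of_le hka hK2
          have hnat2 : (k-1:ℕ) < 2 := by exact_mod_cast hnat
          have hk2 : ((k-1:ℕ):ℝ) ≤ 1 := by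
            have : (k-1:ℕ) ≤ 1 := by omega
            exact_mod_cast this
          have hd : (1:ℝ) < (1-2*a)^2/(4*a) := by
            rw [lt_div_iff₀ (by linarith)]
            have h8 : (1-2*a)^2 = 1 - 4*a + 4*a^2 := by ring
            nlinarith [sq_nonneg a]
          linarith
        · push_neg at hK2
          have hs₀14 : s₀ < 1/4 := by
            rw [hKdef] at hK2
            have h5 := (lt_div_iff₀ (by positivity : (0:ℝ) < 2 * s₀)).mp hK2
            linarith
          have hKle : K ≤ (1-2*a)^2/(4*a) := by
            rw [hKdef, div_le_div_iff₀ (by linarith) (by linarith)]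
            have e1 : 4*a ≤ 4*s₀^2 := by linarith
            have e15 : s₀ * s₀ ≤ s₀ * (1/4) := mul_le_mul_of_nonneg_left hs₀14.le hs₀pos.le
            have e16 : s₀ ^ 2 = s₀ * s₀ := sq s₀
            have e2 : 4*s₀^2 ≤ s₀ := by linarith
            have e3 : (3:ℝ)/4 ≤ 1-2*a := by linarith
            have e35 : (1/2 : ℝ) ≤ (1-2*a)^2 := by
              have e36 : ((3:ℝ)/4)^2 ≤ (1-2*a)^2 := pow_le_pow_left₀ (by norm_num) e3 2
              linarith
            have e4 : (1/2)*(2*s₀) ≤ (1-2*a)^2 * (2*s₀) :=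
              mul_le_mul_of_nonneg_right e35 (by linarith)
            linarith
          linarith
      have hxid : x * (1/2 - a) = (1-2*a)^2/(4*a) := by
        rw [hxdef]; field_simp; ring
      have hmono : x * (1/2 - a) ≤ (m:ℝ) * (1/2 - a) :=
        mul_le_mul_of_nonneg_right hmx (by linarith)
      have hexpand : (m:ℝ)*(1/2-a) = (m:ℝ)*(1/2) - (m:ℝ)*a := by ring
      linarith
    -- final assembly for CASE II
    calc ENNReal.ofReal a + (ENNReal.ofReal a + μ W)
        ≤ ENNReal.ofReal a + (ENNReal.ofReal a + ENNReal.ofReal s₀) :=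
          add_le_add_right (add_le_add_right hWbound _) _
      _ = ENNReal.ofReal (a + (a + s₀)) := by
          rw [ENNReal.ofReal_add hapos.le (by positivity),
            ENNReal.ofReal_add hapos.le hs₀pos.le]
      _ ≤ ENNReal.ofReal (3 * s₀) := by
          refine ENNReal.ofReal_le_ofReal ?_
          linarith
end

section
/- Let (Ω,d,μ) be a probability metric space with concentration function α, let ε > 0, let N ∈ ℕ, and let x₁, x₂, …, x_N be independent Ω-valued random points each distributed according to μ. Then with probability at least 1 − 2N·α(ε/2), the random set X = {x₁, …, x_N} is weakly ε-homogeneous in Ω. -/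
open MeasureTheory Metric ENNReal Filter Set

section Aux

variable {Ω : Type*} [MetricSpace Ω] [MeasurableSpace Ω]

lemma Rrad_nonneg (μ : Measure Ω) (x : Ω) : 0 ≤ Rrad μ x :=
  Real.sSup_nonneg fun _ hr => hr.1.le

lemma exists_ball_half_lt (μ : Measure Ω) [IsProbabilityMeasure μ] (x : Ω) :
    ∃ n : ℕ, 1/2 < μ (ball x n) := by
  have h1 : Tendsto (fun n : ℕ => μ (ball x n)) atTop (nhds (μ (⋃ n : ℕ, ball x n))) :=
    tendsto_measure_iUnion_atTop fun m n hmn => ball_subset_ball (by exact_mod_cast hmn)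
  rw [iUnion_ball_nat, measure_univ] at h1
  exact (h1.eventually (eventually_gt_nhds (by norm_num : (1/2 : ℝ≥0∞) < 1))).exists

lemma bddAbove_Rset (μ : Measure Ω) [IsProbabilityMeasure μ] (x : Ω) :
    BddAbove {r : ℝ | 0 < r ∧ μ (ball x r) ≤ 1/2} := by
  obtain ⟨n, hn⟩ := exists_ball_half_lt μ x
  refine ⟨n, fun r hr => ?_⟩
  by_contra h
  push_neg at h
  exact absurd (le_trans (measure_mono (ball_subset_ball h.le)) hr.2) hn.not_ge

lemma Rrad_le (μ : Measure Ω) [IsProbabilityMeasure μ] (x y : Ω) :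
    Rrad μ x ≤ Rrad μ y + dist x y := by
  rcases Set.eq_empty_or_nonempty {r : ℝ | 0 < r ∧ μ (ball x r) ≤ 1/2} with he | hne
  · rw [Rrad, he, Real.sSup_empty]
    have := Rrad_nonneg μ y
    have := dist_nonneg (x := x) (y := y)
    linarith
  · apply csSup_le hne
    intro r hr
    by_cases hd : r ≤ dist x y
    · have := Rrad_nonneg μ y; linarith
    · push_neg at hd
      have hmem : r - dist x y ∈ {s : ℝ | 0 < s ∧ μ (ball y s) ≤ 1/2} := by
        refine ⟨by linarith, le_trans (measure_mono fun z hz => ?_) hr.2⟩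
        have hz' : dist z y < r - dist x y := hz
        have : dist z x ≤ dist z y + dist y x := dist_triangle z y x
        have hyx : dist y x = dist x y := dist_comm y x
        show dist z x < r
        linarith
      have := le_csSup (bddAbove_Rset μ y) hmem
      have : r - dist x y ≤ Rrad μ y := this
      linarith

lemma lipschitz_Rrad (μ : Measure Ω) [IsProbabilityMeasure μ] :
    LipschitzWith 1 (Rrad μ) := by
  refine LipschitzWith.of_dist_le_mul fun x y => ?_
  rw [NNReal.coe_one, one_mul, Real.dist_eq, abs_sub_le_iff]
  constructor
  · have := Rrad_le μ x y; linarith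
  · have := Rrad_le μ y x
    rw [dist_comm y x] at this
    linarith

variable [BorelSpace Ω]

lemma Rrad_measurable (μ : Measure Ω) [IsProbabilityMeasure μ] :
    Measurable (Rrad μ) :=
  (lipschitz_Rrad μ).continuous.measurable

lemma median_exists (μ : Measure Ω) [IsProbabilityMeasure μ] :
    ∃ M : ℝ, 1/2 ≤ μ {y | Rrad μ y ≤ M} ∧ 1/2 ≤ μ {y | M ≤ Rrad μ y} := by
  have hcont := (lipschitz_Rrad μ).continuous
  set T : Set ℝ := {t | 1/2 ≤ μ {y | Rrad μ y ≤ t}} with hT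
  have hTne : T.Nonempty := by
    have h1 : Tendsto (fun n : ℕ => μ {y | Rrad μ y ≤ n}) atTop
        (nhds (μ (⋃ n : ℕ, {y | Rrad μ y ≤ n}))) :=
      tendsto_measure_iUnion_atTop fun m n hmn z hz => by
        simp only [mem_setOf_eq] at hz ⊢
        exact le_trans hz (by exact_mod_cast hmn)
    have huniv : (⋃ n : ℕ, {y | Rrad μ y ≤ (n : ℝ)}) = univ := by
      ext y
      simp only [mem_iUnion, mem_setOf_eq, mem_univ, iff_true]
      exact exists_nat_ge (Rrad μ y)
    rw [huniv, measure_univ] at h1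
    obtain ⟨n, hn⟩ := (h1.eventually
      (eventually_gt_nhds (by norm_num : (1/2 : ℝ≥0∞) < 1))).exists
    exact ⟨n, hn.le⟩
  have hTbdd : BddBelow T := by
    refine ⟨0, fun t ht => ?_⟩
    by_contra h
    push_neg at h
    have : {y | Rrad μ y ≤ t} = ∅ := by
      ext y
      simp only [mem_setOf_eq, mem_empty_iff_false, iff_false, not_le]
      exact lt_of_lt_of_le h (Rrad_nonneg μ y)
    rw [hT, mem_setOf_eq, this, measure_empty] at ht
    simp at ht
  set M := sInf T with hM
  refine ⟨M, ?_, ?_⟩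
  · -- μ {R ≤ M} ≥ 1/2
    set s : ℕ → Set Ω := fun n => {y | Rrad μ y ≤ M + ((n : ℝ) + 1)⁻¹} with hs
    have hmeas : ∀ n, NullMeasurableSet (s n) μ :=
      fun n => ((isClosed_le hcont continuous_const).measurableSet).nullMeasurableSet
    have hanti : Antitone s := fun m n hmn z hz => by
      simp only [hs, mem_setOf_eq] at hz ⊢
      have : ((n : ℝ) + 1)⁻¹ ≤ ((m : ℝ) + 1)⁻¹ := by
        apply inv_anti₀ (by positivity)
        exact_mod_cast Nat.succ_le_succ hmn
      linarith
    have hiInter : (⋂ n, s n) = {y | Rrad μ y ≤ M} := by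
      ext y
      simp only [mem_iInter, hs, mem_setOf_eq]
      constructor
      · intro h
        by_contra hgt
        push_neg at hgt
        obtain ⟨n, hn⟩ := exists_nat_one_div_lt (sub_pos.2 hgt)
        have := h n
        rw [one_div] at hn
        linarith
      · intro h n
        have : (0:ℝ) < ((n : ℝ) + 1)⁻¹ := by positivity
        linarith
    have htend : Tendsto (fun n => μ (s n)) atTop (nhds (μ (⋂ n, s n))) :=
      tendsto_measure_iInter_atTop hmeas hanti ⟨0, measure_ne_top μ _⟩
    rw [hiInter] at htend
    refine ge_of_tendsto htend (Eventually.of_forall fun n => ?_)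
    have hpos : (0:ℝ) < ((n : ℝ) + 1)⁻¹ := by positivity
    obtain ⟨t, htT, htlt⟩ := (csInf_lt_iff hTbdd hTne).1
      (show sInf T < M + ((n : ℝ) + 1)⁻¹ by rw [← hM]; linarith)
    refine le_trans htT (measure_mono fun z hz => ?_)
    simp only [mem_setOf_eq] at hz
    simp only [hs, mem_setOf_eq]
    linarith
  · -- μ {M ≤ R} ≥ 1/2
    have hsub : μ {y | Rrad μ y < M} ≤ 1/2 := by
      set u : ℕ → Set Ω := fun n => {y | Rrad μ y ≤ M - ((n : ℝ) + 1)⁻¹} with hu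
      have hmono : Monotone u := fun m n hmn z hz => by
        simp only [hu, mem_setOf_eq] at hz ⊢
        have : ((n : ℝ) + 1)⁻¹ ≤ ((m : ℝ) + 1)⁻¹ := by
          apply inv_anti₀ (by positivity)
          exact_mod_cast Nat.succ_le_succ hmn
        linarith
      have hiUnion : (⋃ n, u n) = {y | Rrad μ y < M} := by
        ext y
        simp only [mem_iUnion, hu, mem_setOf_eq]
        constructor
        · rintro ⟨n, hn⟩
          have : (0:ℝ) < ((n : ℝ) + 1)⁻¹ := by positivity
          linarith
        · intro h
          obtain ⟨n, hn⟩ := exists_nat_one_div_lt (sub_pos.2 h)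
          rw [one_div] at hn
          exact ⟨n, by linarith⟩
      have htend : Tendsto (fun n => μ (u n)) atTop (nhds (μ (⋃ n, u n))) :=
        tendsto_measure_iUnion_atTop hmono
      rw [hiUnion] at htend
      refine le_of_tendsto htend (Eventually.of_forall fun n => ?_)
      have hnotin : M - ((n : ℝ) + 1)⁻¹ ∉ T := by
        intro hin
        have := csInf_le hTbdd hin
        have hpos : (0:ℝ) < ((n : ℝ) + 1)⁻¹ := by positivity
        rw [← hM] at this
        linarith
      rw [hT, mem_setOf_eq, not_le] at hnotin
      exact hnotin.le
    have hcompl : {y | M ≤ Rrad μ y} = {y | Rrad μ y < M}ᶜ := by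
      ext y; simp [not_lt]
    rw [hcompl, prob_compl_eq_one_sub
      ((isOpen_lt hcont continuous_const).measurableSet)]
    calc (1 : ℝ≥0∞)/2 = 1 - 1/2 := by
          rw [eq_comm]
          simpa using ENNReal.sub_half (a := 1) one_ne_top
      _ ≤ 1 - μ {y | Rrad μ y < M} := tsub_le_tsub_left hsub 1

lemma meas_bad_le (μ : Measure Ω) [IsProbabilityMeasure μ] {δ : ℝ} (hδ : 0 < δ)
    {M : ℝ} (h1 : 1/2 ≤ μ {y | Rrad μ y ≤ M}) (h2 : 1/2 ≤ μ {y | M ≤ Rrad μ y}) :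
    μ ({y | M + δ ≤ Rrad μ y} ∪ {y | Rrad μ y ≤ M - δ}) ≤ 2 * concFn μ δ := by
  have hcont := (lipschitz_Rrad μ).continuous
  set I : ℝ≥0∞ :=
    ⨅ (A : Set Ω) (_ : MeasurableSet A) (_ : 1/2 ≤ μ A), μ (Metric.thickening δ A) with hI
  have hconc : concFn μ δ = 1 - I := rfl
  have key : ∀ (A : Set Ω), MeasurableSet A → 1/2 ≤ μ A →
      ∀ (S : Set Ω), Metric.thickening δ A ⊆ S → I ≤ μ S := by
    intro A hA hμA S hS
    calc I ≤ μ (Metric.thickening δ A) :=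
          iInf_le_of_le A (iInf_le_of_le hA (iInf_le _ hμA))
      _ ≤ μ S := measure_mono hS
  have hup : μ {y | M + δ ≤ Rrad μ y} ≤ concFn μ δ := by
    have hsubset : Metric.thickening δ {y | Rrad μ y ≤ M} ⊆ {y | Rrad μ y < M + δ} := by
      intro y hy
      obtain ⟨z, hz, hdz⟩ := Metric.mem_thickening_iff.1 hy
      have := Rrad_le μ y z
      simp only [mem_setOf_eq] at hz ⊢
      linarith
    have hIle : I ≤ μ {y | Rrad μ y < M + δ} :=
      key _ ((isClosed_le hcont continuous_const).measurableSet) h1 _ hsubset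
    have hcompl : {y | M + δ ≤ Rrad μ y} = {y | Rrad μ y < M + δ}ᶜ := by
      ext y; simp [not_lt]
    rw [hcompl, prob_compl_eq_one_sub ((isOpen_lt hcont continuous_const).measurableSet),
      hconc]
    exact tsub_le_tsub_left hIle 1
  have hdown : μ {y | Rrad μ y ≤ M - δ} ≤ concFn μ δ := by
    have hsubset : Metric.thickening δ {y | M ≤ Rrad μ y} ⊆ {y | M - δ < Rrad μ y} := by
      intro y hy
      obtain ⟨z, hz, hdz⟩ := Metric.mem_thickening_iff.1 hy
      have := Rrad_le μ z y
      rw [dist_comm z y] at this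
      simp only [mem_setOf_eq] at hz ⊢
      linarith
    have hIle : I ≤ μ {y | M - δ < Rrad μ y} :=
      key _ ((isClosed_le continuous_const hcont).measurableSet) h2 _ hsubset
    have hcompl : {y | Rrad μ y ≤ M - δ} = {y | M - δ < Rrad μ y}ᶜ := by
      ext y; simp [not_lt]
    rw [hcompl, prob_compl_eq_one_sub ((isOpen_lt continuous_const hcont).measurableSet),
      hconc]
    exact tsub_le_tsub_left hIle 1
  calc μ ({y | M + δ ≤ Rrad μ y} ∪ {y | Rrad μ y ≤ M - δ})
      ≤ μ {y | M + δ ≤ Rrad μ y} + μ {y | Rrad μ y ≤ M - δ} := measure_union_le _ _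
    _ ≤ concFn μ δ + concFn μ δ := add_le_add hup hdown
    _ = 2 * concFn μ δ := (two_mul _).symm

end Aux

open scoped Classical in
/-- If `N` points are thrown independently into `Ω`, each distributed according to
`μ`, then with probability at least `1 - 2N·α(ε/2)` the resulting dataset
`X = {x₁, …, x_N}` is weakly `ε`-homogeneous in `Ω`. -/
theorem random_dataset_weakly_homogeneous
    {Ω : Type*} [MetricSpace Ω] [MeasurableSpace Ω] [BorelSpace Ω]
    (μ : Measure Ω) [IsProbabilityMeasure μ] (ε : ℝ) (hε : 0 < ε)
    (N : ℕ) (hN : 0 < N)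
    {P : Type*} [MeasurableSpace P] (ℙ : Measure P) [IsProbabilityMeasure ℙ]
    (x : Fin N → P → Ω) (hmeas : ∀ i, Measurable (x i))
    (hindep : ProbabilityTheory.iIndepFun x ℙ)
    (hlaw : ∀ i, Measure.map (x i) ℙ = μ) :
    1 - 2 * N * concFn μ (ε / 2) ≤
      ℙ {ω : P | WeaklyHomogeneous μ ε (Finset.univ.image fun i => x i ω)} := by
  have hcont := (lipschitz_Rrad μ).continuous
  obtain ⟨M, h1, h2⟩ := median_exists μ
  set δ : ℝ := ε / 2 with hδdef
  have hδ : 0 < δ := by positivity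
  set B : Set Ω := {y | M + δ ≤ Rrad μ y} ∪ {y | Rrad μ y ≤ M - δ} with hB
  have hBmeas : MeasurableSet B :=
    ((isClosed_le continuous_const hcont).measurableSet).union
      ((isClosed_le hcont continuous_const).measurableSet)
  have hμB : μ B ≤ 2 * concFn μ δ := meas_bad_le μ hδ h1 h2
  have hGsub : (⋃ i, (x i) ⁻¹' B)ᶜ ⊆
      {ω : P | WeaklyHomogeneous μ ε (Finset.univ.image fun i => x i ω)} := by
    intro ω hω
    simp only [Set.mem_compl_iff, Set.mem_iUnion, not_exists] at hω
    intro a ha b hb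
    simp only [Finset.mem_image, Finset.mem_univ, true_and] at ha hb
    obtain ⟨i, rfl⟩ := ha
    obtain ⟨j, rfl⟩ := hb
    have hi := hω i
    have hj := hω j
    simp only [Set.mem_preimage, hB, Set.mem_union, Set.mem_setOf_eq, not_or, not_le] at hi hj
    have hδε : 2 * δ = ε := by rw [hδdef]; ring
    linarith [hi.1, hj.2]
  have hUnion : ℙ (⋃ i, (x i) ⁻¹' B) ≤ 2 * N * concFn μ δ := by
    calc ℙ (⋃ i, (x i) ⁻¹' B) ≤ ∑ i : Fin N, ℙ ((x i) ⁻¹' B) :=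
          measure_iUnion_fintype_le ℙ _
      _ = ∑ _i : Fin N, μ B := by
          refine Finset.sum_congr rfl fun i _ => ?_
          rw [← hlaw i, Measure.map_apply (hmeas i) hBmeas]
      _ = N * μ B := by simp [Finset.sum_const, mul_comm]
      _ ≤ N * (2 * concFn μ δ) := mul_le_mul_right hμB _
      _ = 2 * N * concFn μ δ := by ring
  calc 1 - 2 * N * concFn μ (ε / 2)
      ≤ 1 - ℙ (⋃ i, (x i) ⁻¹' B) := tsub_le_tsub_left hUnion 1
    _ = ℙ ((⋃ i, (x i) ⁻¹' B)ᶜ) :=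
        (prob_compl_eq_one_sub (MeasurableSet.iUnion fun i => (hmeas i) hBmeas)).symm
    _ ≤ ℙ {ω : P | WeaklyHomogeneous μ ε (Finset.univ.image fun i => x i ω)} :=
        measure_mono hGsub
end
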